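/- arXiv:2503.14479 — 2 statements merged into one kernel-verified Lean document; each statement's English description precedes it below -/
import Mathlib

section
/- Let H be a finite-dimensional real inner product space, let β > 0, let f : H → ℝ ∪ {+∞} be proper, lower semicontinuous, and convex, let g : H → ℝ be convex and differentiable with β-Lipschitz gradient, let x be a minimizer of f + g, let 0 < ε < 1/β, and let γ ∈ [ε, 2/β − ε]. Then for any xₙ ∈ H, setting xₙ₊₁ = prox_{γ f}(xₙ − γ ∇g(xₙ)), one has ‖xₙ₊₁ − x‖² ≤ ‖xₙ − x‖² − ε² ‖∇g(xₙ) − ∇g(x)‖². -/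
/-!
The prox step and the optimality of `x⋆` are first-order conditions for minimizing
"convex + smooth"; perturbing along a segment turns each into an inequality for `f` on its
effective domain, where `f` is real-valued and convex. Adding the two gives
`‖xₙ₊₁ - x⋆‖² ≤ ⟪p, xₙ₊₁ - x⋆⟫` for the forward-step difference
`p = (xₙ - x⋆) - γ (∇g xₙ - ∇g x⋆)`, hence `‖xₙ₊₁ - x⋆‖ ≤ ‖p‖`. The descent lemma and the
gradient inequality make `∇g` `1/β`-cocoercive (Baillon–Haddad), so
`‖p‖² ≤ ‖xₙ - x⋆‖² - γ (2/β - γ) ‖∇g xₙ - ∇g x⋆‖²`, and `γ (2/β - γ) ≥ ε²` on `[ε, 2/β - ε]`.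
-/

open Filter Topology

noncomputable section

def ConvexE {E : Type*} [AddCommGroup E] [Module ℝ E] (f : E → EReal) : Prop :=
  ∀ x y : E, ∀ a b : ℝ, 0 ≤ a → 0 ≤ b → a + b = 1 →
    f (a • x + b • y) ≤ (a : EReal) * f x + (b : EReal) * f y

open AffineMap
open scoped RealInnerProductSpace

theorem ConvexE.convexOn_toReal {E : Type*} [AddCommGroup E] [Module ℝ E] {f : E → EReal}
    (hf : ConvexE f) (hbot : ∀ z, f z ≠ ⊥) :
    ConvexOn ℝ {z | f z ≠ ⊤} (fun z => (f z).toReal) := by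
  have key : ∀ ⦃x⦄, f x ≠ ⊤ → ∀ ⦃y⦄, f y ≠ ⊤ → ∀ ⦃a b : ℝ⦄, 0 ≤ a → 0 ≤ b → a + b = 1 →
      f (a • x + b • y) ≤ ((a * (f x).toReal + b * (f y).toReal : ℝ) : EReal) := by
    intro x hx y hy a b ha hb hab
    rw [EReal.coe_add, EReal.coe_mul, EReal.coe_mul, EReal.coe_toReal hx (hbot x),
      EReal.coe_toReal hy (hbot y)]
    exact hf x y a b ha hb hab
  refine ⟨fun x hx y hy a b ha hb hab => ne_top_of_le_ne_top (EReal.coe_ne_top _)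
    (key hx hy ha hb hab), fun x hx y hy a b ha hb hab => ?_⟩
  have := EReal.toReal_le_toReal (key hx hy ha hb hab) (hbot _) (EReal.coe_ne_top _)
  rwa [EReal.toReal_coe] at this

theorem ne_top_of_forall_coe_mul_add_le {α : Type*} {f : α → EReal} {h : α → ℝ} {c : ℝ}
    (hc : 0 < c) {p z : α} (hz : f z ≠ ⊤) (hz_bot : f z ≠ ⊥)
    (hmin : ∀ y, (c : EReal) * f p + h p ≤ c * f y + h y) :
    f p ≠ ⊤ := by
  intro hp
  have := hmin z
  rw [hp, EReal.mul_top_of_pos (EReal.coe_pos.2 hc), EReal.top_add_coe, top_le_iff,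
    ← EReal.coe_toReal hz hz_bot, ← EReal.coe_mul, ← EReal.coe_add] at this
  exact EReal.coe_ne_top _ this

section InnerProductSpace

variable {H : Type*} [NormedAddCommGroup H] [InnerProductSpace ℝ H]

theorem norm_sq_le_of_norm_sq_le_inner {a b : H} (h : ‖a‖ ^ 2 ≤ ⟪b, a⟫) :
    ‖a‖ ^ 2 ≤ ‖b‖ ^ 2 := by
  nlinarith [real_inner_le_norm b a, sq_nonneg (‖a‖ - ‖b‖)]

variable [CompleteSpace H]

theorem hasGradientAt_half_norm_sub_sq (u p : H) :
    HasGradientAt (fun z => 1 / 2 * ‖u - z‖ ^ 2) (p - u) p := by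
  rw [hasGradientAt_iff_hasFDerivAt]
  refine ((((hasFDerivAt_id p).const_sub u).norm_sq).const_mul (1 / 2)).congr_fderiv ?_
  ext w
  simp

theorem HasGradientAt.hasDerivAt_comp_lineMap {g : H → ℝ} {v x y : H} {t : ℝ}
    (hg : HasGradientAt g v (lineMap x y t)) :
    HasDerivAt (fun s => g (lineMap x y s)) ⟪v, y - x⟫ t := by
  have h := hg.hasFDerivAt.comp_hasDerivAt t hasDerivAt_lineMap
  simp only [InnerProductSpace.toDual_apply_apply] at h
  exact h

theorem ConvexOn.add_inner_le_of_hasGradientAt {s : Set H} {g : H → ℝ} {v x y : H}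
    (hg : ConvexOn ℝ s g) (hx : x ∈ s) (hy : y ∈ s) (hv : HasGradientAt g v x) :
    g x + ⟪v, y - x⟫ ≤ g y := by
  have hslope := (hg.comp_affineMap (lineMap x y)).le_slope_of_hasDerivAt
    (by simpa using hx) (by simpa using hy) zero_lt_one
    (HasGradientAt.hasDerivAt_comp_lineMap (t := 0) (by simpa using hv))
  simp only [slope_def_field, Function.comp_apply, lineMap_apply_one, lineMap_apply_zero,
    sub_zero, div_one] at hslope
  linarith

theorem ConvexOn.sub_le_inner_of_isMinOn_add {s : Set H} {F h : H → ℝ} {v p y : H}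
    (hF : ConvexOn ℝ s F) (hh : HasGradientAt h v p) (hp : p ∈ s) (hy : y ∈ s)
    (hmin : IsMinOn (fun z => F z + h z) s p) :
    F p - F y ≤ ⟪v, y - p⟫ := by
  have hderiv := HasGradientAt.hasDerivAt_comp_lineMap (y := y) (t := 0) (by simpa using hh)
  have hslope := (hasDerivWithinAt_iff_tendsto_slope' (s := Set.Ioi 0) (by simp)).mp
    hderiv.hasDerivWithinAt
  refine ge_of_tendsto hslope ?_
  filter_upwards [Ioc_mem_nhdsGT zero_lt_one] with t ⟨ht0, ht1⟩
  have hmem : lineMap p y t ∈ s := hF.1.lineMap_mem hp hy ⟨ht0.le, ht1⟩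
  have hconv : F (lineMap p y t) ≤ (1 - t) * F p + t * F y := by
    simpa [lineMap_apply_module] using
      hF.2 hp hy (sub_nonneg.2 ht1) ht0.le (sub_add_cancel 1 t)
  have hle : F p + h p ≤ F (lineMap p y t) + h (lineMap p y t) := hmin hmem
  rw [slope_def_field, le_div_iff₀ (by simpa using ht0)]
  simp only [lineMap_apply_zero, sub_zero]
  nlinarith

theorem ConvexE.mul_sub_le_inner_of_forall_le {f : H → EReal} {h : H → ℝ} {c : ℝ} {v p y : H}
    (hf : ConvexE f) (hbot : ∀ z, f z ≠ ⊥) (hc : 0 < c) (hh : HasGradientAt h v p)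
    (hmin : ∀ y, (c : EReal) * f p + h p ≤ c * f y + h y) (hp : f p ≠ ⊤) (hy : f y ≠ ⊤) :
    c * ((f p).toReal - (f y).toReal) ≤ ⟪v, y - p⟫ := by
  have hmin' : IsMinOn (fun z => (c • fun z => (f z).toReal) z + h z) {z | f z ≠ ⊤} p := by
    intro z hz
    have := hmin z
    rw [← EReal.coe_toReal hp (hbot p), ← EReal.coe_toReal hz (hbot z)] at this
    exact_mod_cast this
  rw [mul_sub]
  exact ((hf.convexOn_toReal hbot).smul hc.le).sub_le_inner_of_isMinOn_add hh hp hy hmin'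

variable {g : H → ℝ} {g' : H → H} {β : ℝ}

theorem le_add_inner_add_sq_of_lipschitz_gradient (hg : ∀ z, HasGradientAt g (g' z) z)
    (hg_lip : ∀ z w, ‖g' z - g' w‖ ≤ β * ‖z - w‖) (x y : H) :
    g y ≤ g x + ⟪g' x, y - x⟫ + β / 2 * ‖y - x‖ ^ 2 := by
  set w := y - x
  -- the gap between the quadratic majorant at `x` and `g`, along the segment; it is antitone
  let φ : ℝ → ℝ := fun t => g (lineMap x y t) - t * ⟪g' x, w⟫ - β / 2 * t ^ 2 * ‖w‖ ^ 2
  have hφ : ∀ t, HasDerivAt φ (⟪g' (lineMap x y t) - g' x, w⟫ - β * t * ‖w‖ ^ 2) t := by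
    intro t
    refine ((((hg _).hasDerivAt_comp_lineMap).sub ((hasDerivAt_id t).mul_const _)).sub
      (((hasDerivAt_pow 2 t).const_mul (β / 2)).mul_const _)).congr_deriv ?_
    rw [inner_sub_left]
    ring
  have hφ_nonpos : ∀ t ∈ interior (Set.Icc (0 : ℝ) 1),
      ⟪g' (lineMap x y t) - g' x, w⟫ - β * t * ‖w‖ ^ 2 ≤ 0 := by
    intro t ht
    rw [interior_Icc] at ht
    have hdist : ‖lineMap x y t - x‖ = t * ‖w‖ := by
      rw [← dist_eq_norm, dist_lineMap_left, Real.norm_of_nonneg ht.1.le, dist_eq_norm']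
    rw [sub_nonpos]
    calc ⟪g' (lineMap x y t) - g' x, w⟫ ≤ ‖g' (lineMap x y t) - g' x‖ * ‖w‖ :=
          real_inner_le_norm _ _
      _ ≤ β * (t * ‖w‖) * ‖w‖ := by
          gcongr
          exact hdist ▸ hg_lip _ _
      _ = β * t * ‖w‖ ^ 2 := by ring
  have hanti := antitoneOn_of_hasDerivWithinAt_nonpos (convex_Icc 0 1)
    (HasDerivAt.continuousOn fun t _ => hφ t) (fun t _ => (hφ t).hasDerivWithinAt) hφ_nonpos
  have := hanti (Set.left_mem_Icc.2 zero_le_one) (Set.right_mem_Icc.2 zero_le_one) zero_le_one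
  simp only [φ, lineMap_apply_zero, lineMap_apply_one] at this
  linarith

theorem ConvexOn.add_inner_add_sq_gradient_sub_le (hβ : 0 < β) (hconv : ConvexOn ℝ Set.univ g)
    (hg : ∀ z, HasGradientAt g (g' z) z) (hg_lip : ∀ z w, ‖g' z - g' w‖ ≤ β * ‖z - w‖)
    (x y : H) :
    g x + ⟪g' x, y - x⟫ + 1 / (2 * β) * ‖g' y - g' x‖ ^ 2 ≤ g y := by
  set d := g' y - g' x
  -- the affine minorant at `x` lies below the quadratic majorant at `y`; compare them at the
  -- minimizer `z` of the gap
  set z := y - (1 / β) • d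
  have hupper := le_add_inner_add_sq_of_lipschitz_gradient hg hg_lip y z
  have hlower := hconv.add_inner_le_of_hasGradientAt (Set.mem_univ x) (Set.mem_univ z) (hg x)
  have hzy : z - y = -((1 / β) • d) := by simp [z]
  have hzx : z - x = (y - x) - (1 / β) • d := by simp only [z]; abel
  rw [hzy, inner_neg_right, real_inner_smul_right, norm_neg, norm_smul, Real.norm_of_nonneg
    (by positivity), mul_pow] at hupper
  rw [hzx, inner_sub_right, real_inner_smul_right] at hlower
  have hd : ⟪g' y, d⟫ - ⟪g' x, d⟫ = ‖d‖ ^ 2 := by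
    rw [← inner_sub_left, real_inner_self_eq_norm_sq]
  field_simp at hupper hlower ⊢
  nlinarith

theorem ConvexOn.cocoercive_gradient (hβ : 0 < β) (hconv : ConvexOn ℝ Set.univ g)
    (hg : ∀ z, HasGradientAt g (g' z) z) (hg_lip : ∀ z w, ‖g' z - g' w‖ ≤ β * ‖z - w‖)
    (x y : H) :
    1 / β * ‖g' y - g' x‖ ^ 2 ≤ ⟪g' y - g' x, y - x⟫ := by
  have hxy := hconv.add_inner_add_sq_gradient_sub_le hβ hg hg_lip x y
  have hyx := hconv.add_inner_add_sq_gradient_sub_le hβ hg hg_lip y x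
  rw [norm_sub_rev, ← neg_sub y x, inner_neg_right] at hyx
  have hhalf : 1 / β = 1 / (2 * β) + 1 / (2 * β) := by field_simp; ring
  rw [hhalf, add_mul, inner_sub_left]
  linarith

theorem ConvexOn.norm_sub_smul_gradient_sub_sq_le {γ : ℝ} (hβ : 0 < β)
    (hconv : ConvexOn ℝ Set.univ g) (hg : ∀ z, HasGradientAt g (g' z) z)
    (hg_lip : ∀ z w, ‖g' z - g' w‖ ≤ β * ‖z - w‖) (hγ : 0 ≤ γ) (x y : H) :
    ‖(x - y) - γ • (g' x - g' y)‖ ^ 2 ≤ ‖x - y‖ ^ 2 - γ * (2 / β - γ) * ‖g' x - g' y‖ ^ 2 := by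
  have hcoco := mul_le_mul_of_nonneg_left (hconv.cocoercive_gradient hβ hg hg_lip y x) hγ
  rw [norm_sub_sq_real, real_inner_smul_right, norm_smul, Real.norm_of_nonneg hγ,
    real_inner_comm]
  linear_combination 2 * hcoco

end InnerProductSpace

theorem proximal_gradient_step_fejer_general
    {H : Type*} [NormedAddCommGroup H] [InnerProductSpace ℝ H] [FiniteDimensional ℝ H]
    (β : ℝ) (hβ : 0 < β)
    (f : H → EReal)
    (hf_proper : ∃ z, f z ≠ ⊤) (hf_ne_bot : ∀ z, f z ≠ ⊥)
    (hf_convex : ConvexE f)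
    (g : H → ℝ) (g' : H → H)
    (hg_convex : ConvexOn ℝ Set.univ g)
    (hg_grad : ∀ z : H, HasGradientAt g (g' z) z)
    (hg_lip : ∀ z w : H, ‖g' z - g' w‖ ≤ β * ‖z - w‖)
    (xstar : H)
    (hxstar : ∀ y : H, f xstar + (g xstar : EReal) ≤ f y + (g y : EReal))
    (ε : ℝ) (hε : 0 < ε)
    (γ : ℝ) (hγ : γ ∈ Set.Icc ε (2/β - ε))
    (xn xn1 : H)
    (hxn1 : ∀ y : H,
      (γ : EReal) * f xn1 + ((1/2 * ‖(xn - γ • g' xn) - xn1‖^2 : ℝ) : EReal) ≤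
        (γ : EReal) * f y + ((1/2 * ‖(xn - γ • g' xn) - y‖^2 : ℝ) : EReal)) :
    ‖xn1 - xstar‖^2 ≤ ‖xn - xstar‖^2 - ε^2 * ‖g' xn - g' xstar‖^2 := by
  obtain ⟨hγε, hγ2⟩ := hγ
  have hγ0 : 0 < γ := hε.trans_le hγε
  obtain ⟨z, hz⟩ := hf_proper
  have hxstar' : ∀ y, ((1 : ℝ) : EReal) * f xstar + g xstar ≤ (1 : ℝ) * f y + g y := by
    simpa only [EReal.coe_one, one_mul] using hxstar
  have hxn1_ne_top := ne_top_of_forall_coe_mul_add_le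
    (h := fun y => 1 / 2 * ‖(xn - γ • g' xn) - y‖ ^ 2) hγ0 hz (hf_ne_bot z) hxn1
  have hxstar_ne_top := ne_top_of_forall_coe_mul_add_le one_pos hz (hf_ne_bot z) hxstar'
  have hprox := hf_convex.mul_sub_le_inner_of_forall_le hf_ne_bot hγ0
    (hasGradientAt_half_norm_sub_sq _ xn1) hxn1 hxn1_ne_top hxstar_ne_top
  have hopt := hf_convex.mul_sub_le_inner_of_forall_le hf_ne_bot one_pos
    (hg_grad xstar) hxstar' hxstar_ne_top hxn1_ne_top
  have hfirm : ‖xn1 - xstar‖ ^ 2 ≤ ⟪(xn - xstar) - γ • (g' xn - g' xstar), xn1 - xstar⟫ := by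
    have hid : ⟪xn1 - (xn - γ • g' xn), xstar - xn1⟫ + γ * ⟪g' xstar, xn1 - xstar⟫ =
        ⟪(xn - xstar) - γ • (g' xn - g' xstar), xn1 - xstar⟫ - ‖xn1 - xstar‖ ^ 2 := by
      rw [← real_inner_self_eq_norm_sq]
      simp only [inner_sub_left, inner_sub_right, real_inner_smul_left, real_inner_comm xstar xn1]
      ring
    linear_combination hprox + γ * hopt + hid
  have hε2 : ε ^ 2 ≤ γ * (2 / β - γ) := by nlinarith
  calc ‖xn1 - xstar‖ ^ 2 ≤ ‖(xn - xstar) - γ • (g' xn - g' xstar)‖ ^ 2 :=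
        norm_sq_le_of_norm_sq_le_inner hfirm
    _ ≤ ‖xn - xstar‖ ^ 2 - γ * (2 / β - γ) * ‖g' xn - g' xstar‖ ^ 2 :=
        hg_convex.norm_sub_smul_gradient_sub_sq_le hβ hg_grad hg_lip hγ0.le xn xstar
    _ ≤ ‖xn - xstar‖ ^ 2 - ε ^ 2 * ‖g' xn - g' xstar‖ ^ 2 := by gcongr

/-- Fejér-type inequality for one proximal gradient step: if `xstar` minimizes `f + g`
and `xn1 = prox_{γ f}(xn - γ ∇g xn)` with `γ ∈ [ε, 2/β - ε]`, then
`‖xn1 - xstar‖² ≤ ‖xn - xstar‖² - ε² ‖∇g xn - ∇g xstar‖²`. -/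
theorem proximal_gradient_step_fejer
    {H : Type*} [NormedAddCommGroup H] [InnerProductSpace ℝ H] [FiniteDimensional ℝ H]
    (β : ℝ) (hβ : 0 < β)
    (f : H → EReal)
    (hf_proper : ∃ z, f z ≠ ⊤) (hf_ne_bot : ∀ z, f z ≠ ⊥)
    (hf_lsc : LowerSemicontinuous f) (hf_convex : ConvexE f)
    (g : H → ℝ) (g' : H → H)
    (hg_convex : ConvexOn ℝ Set.univ g)
    (hg_grad : ∀ z : H, HasGradientAt g (g' z) z)
    (hg_lip : ∀ z w : H, ‖g' z - g' w‖ ≤ β * ‖z - w‖)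
    (xstar : H)
    (hxstar : ∀ y : H, f xstar + (g xstar : EReal) ≤ f y + (g y : EReal))
    (ε : ℝ) (hε : 0 < ε) (hεβ : ε < 1/β)
    (γ : ℝ) (hγ : γ ∈ Set.Icc ε (2/β - ε))
    (xn xn1 : H)
    (hxn1 : ∀ y : H,
      (γ : EReal) * f xn1 + ((1/2 * ‖(xn - γ • g' xn) - xn1‖^2 : ℝ) : EReal) ≤
        (γ : EReal) * f y + ((1/2 * ‖(xn - γ • g' xn) - y‖^2 : ℝ) : EReal)) :
    ‖xn1 - xstar‖^2 ≤ ‖xn - xstar‖^2 - ε^2 * ‖g' xn - g' xstar‖^2 :=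
  proximal_gradient_step_fejer_general β hβ f hf_proper hf_ne_bot hf_convex g g' hg_convex hg_grad
    hg_lip xstar hxstar ε hε γ hγ xn xn1 hxn1
end
end

section
/- Let H be a finite-dimensional real inner product space, let β > 0, let C be a nonempty closed convex subset of H, let g : H → ℝ be convex and differentiable with β-Lipschitz gradient, and assume that g attains its minimum over C at some point. Let x₀ ∈ C, let 0 < ε < 1/β, let (γₙ) be a sequence in [ε, 2/β − ε], and define the projected gradient iterates by xₙ₊₁ = proj_C(xₙ − γₙ ∇g(xₙ)), where proj_C denotes the metric projection onto C. Then the sequence (xₙ) converges to a minimizer of g over C. -/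
/-!
A minimizer `p` of `g` on `C` is a fixed point of every projected gradient step
`T_γ z = proj_C (z - γ ∇g z)` with `γ > 0`. Firm nonexpansiveness of `proj_C` and the
Baillon–Haddad cocoercivity `‖∇g z - ∇g w‖² ≤ β ⟪∇g z - ∇g w, z - w⟫` give, for `γ ∈ [ε, 2/β - ε]`,
`‖T_γ y - p‖² + ‖y - T_γ y - γ (∇g y - ∇g p)‖² + ε² ‖∇g y - ∇g p‖² ≤ ‖y - p‖²`.
So the iterates are Fejér monotone with respect to the minimizers and `x (n+1) - x n → 0`.
By compactness a subsequence of `(γ n, x n)` converges to some `(γ₀, x₀)`; continuity of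
`(γ, z) ↦ T_γ z` makes `x₀` a fixed point of `T_γ₀`, hence a minimizer, and Fejér monotonicity
with respect to `x₀` turns subsequential convergence into convergence.
-/

open Filter Topology Set RealInnerProductSpace

theorem tendsto_zero_of_add_succ_le {a b : ℕ → ℝ} (ha : ∀ n, 0 ≤ a n) (hb : ∀ n, 0 ≤ b n)
    (h : ∀ n, b n + a (n + 1) ≤ a n) : Tendsto b atTop (𝓝 0) := by
  have hanti : Antitone a := antitone_nat_of_succ_le fun n => by linarith [hb n, h n]
  have hlim := tendsto_atTop_ciInf hanti ⟨0, by rintro _ ⟨n, rfl⟩; exact ha n⟩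
  have hdiff : Tendsto (fun n => a n - a (n + 1)) atTop (𝓝 0) := by
    simpa using hlim.sub (hlim.comp (tendsto_add_atTop_nat 1))
  exact squeeze_zero hb (fun n => by linarith [h n]) hdiff

theorem tendsto_sub_succ_of_norm_sq_add_le {E : Type*} [SeminormedAddCommGroup E]
    [NormedSpace ℝ E] {x d : ℕ → E} {γ : ℕ → ℝ} {p : E} {ε M : ℝ} (hε : 0 < ε)
    (hγ : ∀ n, γ n ∈ Icc 0 M)
    (h : ∀ n, ‖x (n + 1) - p‖ ^ 2 + ‖(x n - x (n + 1)) - γ n • d n‖ ^ 2 + ε ^ 2 * ‖d n‖ ^ 2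
      ≤ ‖x n - p‖ ^ 2) :
    Tendsto (fun n => x (n + 1) - x n) atTop (𝓝 0) := by
  set b := fun n => ‖(x n - x (n + 1)) - γ n • d n‖ ^ 2 + ε ^ 2 * ‖d n‖ ^ 2
  have hb : Tendsto b atTop (𝓝 0) :=
    tendsto_zero_of_add_succ_le (a := fun n => ‖x n - p‖ ^ 2) (fun n => sq_nonneg _)
      (fun n => by positivity) fun n => by linarith [h n]
  refine squeeze_zero_norm (fun n => ?_) (by simpa using hb.sqrt.const_mul (1 + M / ε))
  obtain ⟨hγ0, hγM⟩ := hγ n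
  have hu : ‖(x n - x (n + 1)) - γ n • d n‖ ≤ √(b n) :=
    Real.le_sqrt_of_sq_le (by simp only [b]; nlinarith [norm_nonneg (d n)])
  have hd : ε * ‖d n‖ ≤ √(b n) :=
    Real.le_sqrt_of_sq_le (by simp only [b]; nlinarith [sq_nonneg ‖(x n - x (n + 1)) - γ n • d n‖])
  have hγd : γ n * ‖d n‖ ≤ M / ε * √(b n) := by
    calc γ n * ‖d n‖ ≤ M * ‖d n‖ := by gcongr
      _ = M / ε * (ε * ‖d n‖) := by field_simp
      _ ≤ M / ε * √(b n) := mul_le_mul_of_nonneg_left hd (div_nonneg (hγ0.trans hγM) hε.le)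
  calc ‖x (n + 1) - x n‖ = ‖((x n - x (n + 1)) - γ n • d n) + γ n • d n‖ := by
        rw [← norm_neg]; congr 1; abel
    _ ≤ ‖(x n - x (n + 1)) - γ n • d n‖ + ‖γ n • d n‖ := norm_add_le _ _
    _ = ‖(x n - x (n + 1)) - γ n • d n‖ + γ n * ‖d n‖ := by
        rw [norm_smul, Real.norm_of_nonneg hγ0]
    _ ≤ (1 + M / ε) * √(b n) := by linarith

theorem tendsto_of_antitone_dist_of_mapClusterPt {X : Type*} [PseudoMetricSpace X] {x : ℕ → X}
    {p : X} (hanti : Antitone fun n => dist (x n) p) (hp : MapClusterPt p atTop x) :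
    Tendsto x atTop (𝓝 p) := by
  refine Metric.tendsto_atTop.mpr fun δ hδ => ?_
  obtain ⟨N, -, hN⟩ := (hp.frequently (Metric.ball_mem_nhds p hδ)).forall_exists_of_atTop 0
  exact ⟨N, fun n hn => (hanti hn).trans_lt hN⟩

theorem apply_eq_of_tendsto_subseq {A X : Type*} [TopologicalSpace A] [NormedAddCommGroup X]
    {T : A → X → X} (hT : Continuous (Function.uncurry T)) {a : ℕ → A} {x : ℕ → X}
    (hx : ∀ n, x (n + 1) = T (a n) (x n)) (hstep : Tendsto (fun n => x (n + 1) - x n) atTop (𝓝 0))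
    {φ : ℕ → ℕ} (hφ : Tendsto φ atTop atTop) {a₀ : A} {x₀ : X}
    (hlim : Tendsto (fun n => (a (φ n), x (φ n))) atTop (𝓝 (a₀, x₀))) : T a₀ x₀ = x₀ := by
  have hnext : Tendsto (fun n => x (φ n + 1)) atTop (𝓝 (T a₀ x₀)) := by
    simpa only [hx, Function.comp_def, Function.uncurry_apply_pair] using (hT.tendsto _).comp hlim
  have hnext' : Tendsto (fun n => x (φ n + 1)) atTop (𝓝 x₀) := by
    simpa using (continuous_snd.tendsto _ |>.comp hlim).add (hstep.comp hφ)
  exact tendsto_nhds_unique hnext hnext'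

section

variable {H : Type*} [NormedAddCommGroup H] [InnerProductSpace ℝ H]

def IsMetricProjection (C : Set H) (P : H → H) : Prop :=
  ∀ z, P z ∈ C ∧ ∀ w ∈ C, ‖z - P z‖ ≤ ‖z - w‖

namespace IsMetricProjection

variable {C : Set H} {P : H → H}

theorem inner_sub_le_zero (hP : IsMetricProjection C P) (hC : Convex ℝ C) (z : H) {w : H}
    (hw : w ∈ C) : ⟪z - P z, w - P z⟫ ≤ 0 := by
  have : Nonempty C := ⟨⟨w, hw⟩⟩
  refine (norm_eq_iInf_iff_real_inner_le_zero hC (hP z).1).mp ?_ w hw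
  exact le_antisymm (le_ciInf fun w => (hP z).2 w w.2)
    (ciInf_le ⟨0, by rintro _ ⟨w, rfl⟩; positivity⟩ (⟨P z, (hP z).1⟩ : C))

theorem eq_iff (hP : IsMetricProjection C P) (hC : Convex ℝ C) {z v : H} :
    P z = v ↔ v ∈ C ∧ ∀ w ∈ C, ⟪z - v, w - v⟫ ≤ 0 := by
  constructor
  · rintro rfl
    exact ⟨(hP z).1, fun w hw => hP.inner_sub_le_zero hC z hw⟩
  · rintro ⟨hv, hvw⟩
    have h1 := hP.inner_sub_le_zero hC z hv
    have h2 := hvw (P z) (hP z).1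
    have : ⟪P z - v, P z - v⟫ ≤ 0 := by
      calc ⟪P z - v, P z - v⟫ = ⟪z - v, P z - v⟫ + ⟪z - P z, v - P z⟫ := by
            rw [← neg_sub (P z) v, inner_neg_right, ← sub_eq_add_neg, ← inner_sub_left,
              sub_sub_sub_cancel_left]
        _ ≤ 0 := by linarith
    exact sub_eq_zero.mp (real_inner_self_nonpos.mp this)

theorem norm_sub_sq_add_norm_sub_sq_le (hP : IsMetricProjection C P) (hC : Convex ℝ C) (a b : H) :
    ‖P a - P b‖ ^ 2 + ‖(a - b) - (P a - P b)‖ ^ 2 ≤ ‖a - b‖ ^ 2 := by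
  have hinner : 0 ≤ ⟪P a - P b, (a - b) - (P a - P b)⟫ := by
    have ha := hP.inner_sub_le_zero hC a (hP b).1
    have hb := hP.inner_sub_le_zero hC b (hP a).1
    simp only [inner_sub_left, inner_sub_right] at ha hb ⊢
    linarith [real_inner_comm (P a) (P b), real_inner_comm a (P a), real_inner_comm b (P b),
      real_inner_comm a (P b), real_inner_comm b (P a)]
  have hsplit := norm_add_sq_real (P a - P b) ((a - b) - (P a - P b))
  rw [add_sub_cancel] at hsplit
  linarith

theorem lipschitzWith_one (hP : IsMetricProjection C P) (hC : Convex ℝ C) : LipschitzWith 1 P :=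
  LipschitzWith.of_dist_le_mul fun a b => by
    rw [NNReal.coe_one, one_mul, dist_eq_norm, dist_eq_norm]
    refine (sq_le_sq₀ (norm_nonneg _) (norm_nonneg _)).mp ?_
    linarith [hP.norm_sub_sq_add_norm_sub_sq_le hC a b, sq_nonneg ‖(a - b) - (P a - P b)‖]

end IsMetricProjection

section Gradient

variable [CompleteSpace H] {g : H → ℝ} {g' : H → H}

theorem HasGradientAt.hasDerivAt_comp_add_smul {d x v : H} {t : ℝ}
    (h : HasGradientAt g d (x + t • v)) :
    HasDerivAt (fun s : ℝ => g (x + s • v)) ⟪d, v⟫ t := by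
  have hline : HasDerivAt (fun s : ℝ => x + s • v) v t := by
    simpa using ((hasDerivAt_id t).smul_const v).const_add x
  exact h.hasFDerivAt.comp_hasDerivAt t hline

theorem ConvexOn.add_inner_le_of_hasGradientAt_s10 (hg : ConvexOn ℝ univ g) {d z : H}
    (hd : HasGradientAt g d z) (y : H) : g z + ⟪d, y - z⟫ ≤ g y := by
  have hφ : ConvexOn ℝ univ fun t : ℝ => g (z + t • (y - z)) := by
    simpa [Function.comp_def, AffineMap.lineMap_apply_module', add_comm]
      using hg.comp_affineMap (AffineMap.lineMap z y)
  have hd0 : HasDerivAt (fun t : ℝ => g (z + t • (y - z))) ⟪d, y - z⟫ 0 :=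
    HasGradientAt.hasDerivAt_comp_add_smul (by simpa using hd)
  have := hφ.le_slope_of_hasDerivAt (mem_univ 0) (mem_univ 1) one_pos hd0
  simp [slope_def_field] at this
  linarith

theorem le_add_inner_add_sq_of_gradient_lipschitz {β : ℝ} (hg : ∀ z, HasGradientAt g (g' z) z)
    (hlip : ∀ z w, ‖g' z - g' w‖ ≤ β * ‖z - w‖) (z y : H) :
    g y ≤ g z + ⟪g' z, y - z⟫ + β / 2 * ‖y - z‖ ^ 2 := by
  set v := y - z
  set ψ : ℝ → ℝ := fun t => g (z + t • v) - t * ⟪g' z, v⟫ - β / 2 * ‖v‖ ^ 2 * t ^ 2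
  have hψ' : ∀ t, HasDerivAt ψ (⟪g' (z + t • v) - g' z, v⟫ - β * t * ‖v‖ ^ 2) t := fun t => by
    have := (((hg (z + t • v)).hasDerivAt_comp_add_smul).sub (hasDerivAt_mul_const ⟪g' z, v⟫)).sub
      ((hasDerivAt_pow 2 t).const_mul (β / 2 * ‖v‖ ^ 2))
    exact this.congr_deriv (by rw [inner_sub_left]; ring)
  have hanti : AntitoneOn ψ (Ici 0) := by
    refine antitoneOn_of_hasDerivWithinAt_nonpos (convex_Ici 0)
      (HasDerivAt.continuousOn fun t _ => hψ' t) (fun t _ => (hψ' t).hasDerivWithinAt) ?_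
    intro t ht
    rw [interior_Ici] at ht
    have hstep : ‖g' (z + t • v) - g' z‖ ≤ β * t * ‖v‖ := by
      simpa [norm_smul, abs_of_pos (mem_Ioi.mp ht), mul_assoc] using hlip (z + t • v) z
    nlinarith [real_inner_le_norm (g' (z + t • v) - g' z) v, norm_nonneg v]
  have := hanti self_mem_Ici (zero_le_one' ℝ) zero_le_one
  simp [ψ, v] at this
  linarith

theorem ConvexOn.norm_gradient_sub_sq_le {β : ℝ} (hβ : 0 < β) (hg : ConvexOn ℝ univ g)
    (hg' : ∀ z, HasGradientAt g (g' z) z) (hlip : ∀ z w, ‖g' z - g' w‖ ≤ β * ‖z - w‖)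
    (z w : H) : ‖g' z - g' w‖ ^ 2 ≤ 2 * β * (g z - g w - ⟪g' w, z - w⟫) := by
  set Δ := g' z - g' w
  -- the descent bound from `z` and the supporting hyperplane at `w` sandwich `g u`
  set u := z - β⁻¹ • Δ
  have hdescent := le_add_inner_add_sq_of_gradient_lipschitz hg' hlip z u
  have hconvex := hg.add_inner_le_of_hasGradientAt_s10 (hg' w) u
  have hΔ : β⁻¹ * ‖Δ‖ ^ 2 = β⁻¹ * ⟪g' z, Δ⟫ - β⁻¹ * ⟪g' w, Δ⟫ := by
    rw [← mul_sub, ← inner_sub_left, real_inner_self_eq_norm_sq]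
  rw [show u - z = -(β⁻¹ • Δ) by simp [u], norm_neg, norm_smul, inner_neg_right,
    real_inner_smul_right, Real.norm_eq_abs, abs_of_pos (inv_pos.mpr hβ)] at hdescent
  rw [show u - w = (z - w) - β⁻¹ • Δ by simp [u]; abel, inner_sub_right,
    real_inner_smul_right] at hconvex
  have hhalf : β / 2 * (β⁻¹ * ‖Δ‖) ^ 2 = β⁻¹ * ‖Δ‖ ^ 2 / 2 := by field_simp
  have key : β⁻¹ * ‖Δ‖ ^ 2 / 2 ≤ g z - g w - ⟪g' w, z - w⟫ := by linarith
  calc ‖Δ‖ ^ 2 = 2 * β * (β⁻¹ * ‖Δ‖ ^ 2 / 2) := by field_simp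
    _ ≤ _ := by gcongr

theorem ConvexOn.norm_gradient_sub_sq_le_mul_inner {β : ℝ} (hβ : 0 < β) (hg : ConvexOn ℝ univ g)
    (hg' : ∀ z, HasGradientAt g (g' z) z) (hlip : ∀ z w, ‖g' z - g' w‖ ≤ β * ‖z - w‖)
    (z w : H) : ‖g' z - g' w‖ ^ 2 ≤ β * ⟪g' z - g' w, z - w⟫ := by
  have hzw := hg.norm_gradient_sub_sq_le hβ hg' hlip z w
  have hwz := hg.norm_gradient_sub_sq_le hβ hg' hlip w z
  rw [norm_sub_rev, ← neg_sub z w, inner_neg_right] at hwz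
  rw [inner_sub_left]
  nlinarith

theorem ConvexOn.isMinOn_iff_forall_inner_nonneg (hg : ConvexOn ℝ univ g) {C : Set H}
    (hC : Convex ℝ C) {p d : H} (hd : HasGradientAt g d p) (hp : p ∈ C) :
    IsMinOn g C p ↔ ∀ w ∈ C, 0 ≤ ⟪d, w - p⟫ := by
  refine ⟨fun hmin w hw => ?_, fun h => isMinOn_iff.mpr fun w hw => ?_⟩
  · exact hmin.localize.hasFDerivWithinAt_nonneg hd.hasFDerivAt.hasFDerivWithinAt
      (sub_mem_posTangentConeAt_of_segment_subset (hC.segment_subset hp hw))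
  · linarith [hg.add_inner_le_of_hasGradientAt_s10 hd w, h w hw]

theorem ConvexOn.norm_gradient_step_sub_sq_add_le {β : ℝ} (hβ : 0 < β) (hg : ConvexOn ℝ univ g)
    (hg' : ∀ z, HasGradientAt g (g' z) z) (hlip : ∀ z w, ‖g' z - g' w‖ ≤ β * ‖z - w‖)
    {γ : ℝ} (hγ : 0 ≤ γ) (y p : H) :
    ‖(y - γ • g' y) - (p - γ • g' p)‖ ^ 2 + γ * (2 / β - γ) * ‖g' y - g' p‖ ^ 2 ≤ ‖y - p‖ ^ 2 := by
  have hcoco : ‖g' y - g' p‖ ^ 2 / β ≤ ⟪y - p, g' y - g' p⟫ := by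
    rw [div_le_iff₀ hβ, real_inner_comm, mul_comm]
    exact hg.norm_gradient_sub_sq_le_mul_inner hβ hg' hlip y p
  rw [show (y - γ • g' y) - (p - γ • g' p) = (y - p) - γ • (g' y - g' p) by rw [smul_sub]; abel,
    norm_sub_sq_real, norm_smul, real_inner_smul_right, Real.norm_eq_abs, abs_of_nonneg hγ, mul_pow]
  have hscaled := mul_le_mul_of_nonneg_left hcoco hγ
  have e : γ * (2 / β) * ‖g' y - g' p‖ ^ 2 = 2 * (γ * (‖g' y - g' p‖ ^ 2 / β)) := by ring
  nlinarith

end Gradient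

section ProjectedGradient

def projGradStep (P g' : H → H) (γ : ℝ) (z : H) : H :=
  P (z - γ • g' z)

variable {C : Set H} {P : H → H} {g' : H → H}

theorem continuous_projGradStep (hP : IsMetricProjection C P) (hC : Convex ℝ C)
    (hg' : Continuous g') : Continuous (Function.uncurry (projGradStep P g')) :=
  (hP.lipschitzWith_one hC).continuous.comp
    (continuous_snd.sub (continuous_fst.smul (hg'.comp continuous_snd)))

variable [CompleteSpace H] {g : H → ℝ}

theorem projGradStep_eq_self_iff (hP : IsMetricProjection C P) (hC : Convex ℝ C)
    (hg : ConvexOn ℝ univ g) (hg' : ∀ z, HasGradientAt g (g' z) z) {γ : ℝ} (hγ : 0 < γ) {p : H} :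
    projGradStep P g' γ p = p ↔ p ∈ C ∧ IsMinOn g C p := by
  rw [projGradStep, hP.eq_iff hC]
  refine and_congr_right fun hp => ?_
  rw [hg.isMinOn_iff_forall_inner_nonneg hC (hg' p) hp]
  refine forall₂_congr fun w _ => ?_
  rw [sub_sub_cancel_left, inner_neg_left, real_inner_smul_left, neg_nonpos]
  exact mul_nonneg_iff_of_pos_left hγ

theorem norm_projGradStep_sub_sq_add_le (hP : IsMetricProjection C P) (hC : Convex ℝ C) {β : ℝ}
    (hβ : 0 < β) (hg : ConvexOn ℝ univ g) (hg' : ∀ z, HasGradientAt g (g' z) z)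
    (hlip : ∀ z w, ‖g' z - g' w‖ ≤ β * ‖z - w‖) {γ ε : ℝ} (hε : 0 < ε)
    (hγ : γ ∈ Icc ε (2 / β - ε)) {p : H} (hp : p ∈ C) (hmin : IsMinOn g C p) (y : H) :
    ‖projGradStep P g' γ y - p‖ ^ 2 + ‖(y - projGradStep P g' γ y) - γ • (g' y - g' p)‖ ^ 2
      + ε ^ 2 * ‖g' y - g' p‖ ^ 2 ≤ ‖y - p‖ ^ 2 := by
  have hγ0 : 0 < γ := hε.trans_le hγ.1
  have hfix : P (p - γ • g' p) = p := (projGradStep_eq_self_iff hP hC hg hg' hγ0).mpr ⟨hp, hmin⟩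
  have hproj := hP.norm_sub_sq_add_norm_sub_sq_le hC (y - γ • g' y) (p - γ • g' p)
  have hgrad := hg.norm_gradient_step_sub_sq_add_le hβ hg' hlip hγ0.le y p
  have hε2 : ε ^ 2 ≤ γ * (2 / β - γ) := by
    rw [sq]; exact mul_le_mul hγ.1 (by linarith [hγ.2]) hε.le hγ0.le
  rw [hfix, show (y - γ • g' y) - (p - γ • g' p) - (P (y - γ • g' y) - p)
    = (y - P (y - γ • g' y)) - γ • (g' y - g' p) by rw [smul_sub]; abel] at hproj
  unfold projGradStep
  nlinarith [mul_le_mul_of_nonneg_right hε2 (sq_nonneg ‖g' y - g' p‖)]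

end ProjectedGradient

end

theorem projected_gradient_iterate_convergence_general
    {H : Type*} [NormedAddCommGroup H] [InnerProductSpace ℝ H] [FiniteDimensional ℝ H]
    (β : ℝ) (hβ : 0 < β)
    (C : Set H) (hC_convex : Convex ℝ C)
    (g : H → ℝ) (g' : H → H)
    (hg_convex : ConvexOn ℝ Set.univ g)
    (hg_grad : ∀ z : H, HasGradientAt g (g' z) z)
    (hg_lip : ∀ z w : H, ‖g' z - g' w‖ ≤ β * ‖z - w‖)
    (xstar : H) (hxstar_mem : xstar ∈ C) (hxstar : ∀ y ∈ C, g xstar ≤ g y)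
    (projC : H → H)
    (hproj : ∀ z : H, projC z ∈ C ∧ ∀ w ∈ C, ‖z - projC z‖ ≤ ‖z - w‖)
    (ε : ℝ) (hε : 0 < ε)
    (γ : ℕ → ℝ) (hγ : ∀ n, γ n ∈ Set.Icc ε (2/β - ε))
    (x : ℕ → H)
    (hiter : ∀ n, x (n+1) = projC (x n - γ n • g' (x n))) :
    ∃ xlim : H, Tendsto x atTop (𝓝 xlim) ∧ xlim ∈ C ∧ ∀ y ∈ C, g xlim ≤ g y := by
  have hP : IsMetricProjection C projC := hproj
  have hdecrease : ∀ p ∈ C, IsMinOn g C p → ∀ n, ‖x (n + 1) - p‖ ^ 2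
      + ‖(x n - x (n + 1)) - γ n • (g' (x n) - g' p)‖ ^ 2
      + ε ^ 2 * ‖g' (x n) - g' p‖ ^ 2 ≤ ‖x n - p‖ ^ 2 := fun p hp hmin n => by
    rw [hiter n]
    exact norm_projGradStep_sub_sq_add_le hP hC_convex hβ hg_convex hg_grad hg_lip hε (hγ n)
      hp hmin _
  have hfejer : ∀ p ∈ C, IsMinOn g C p → Antitone fun n => dist (x n) p := fun p hp hmin =>
    antitone_nat_of_succ_le fun n => by
      rw [dist_eq_norm, dist_eq_norm, ← sq_le_sq₀ (norm_nonneg _) (norm_nonneg _)]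
      nlinarith [hdecrease p hp hmin n]
  have hstar : IsMinOn g C xstar := isMinOn_iff.mpr hxstar
  have hstep := tendsto_sub_succ_of_norm_sq_add_le hε
    (fun n => ⟨hε.le.trans (hγ n).1, (hγ n).2⟩) (hdecrease xstar hxstar_mem hstar)
  obtain ⟨⟨γ₀, x₀⟩, hγ₀, φ, hφ, hlim⟩ :=
    (isCompact_Icc.prod (isCompact_closedBall xstar (dist (x 0) xstar))).tendsto_subseq
      (x := fun n => (γ n, x n)) fun n => ⟨hγ n, hfejer xstar hxstar_mem hstar (Nat.zero_le n)⟩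
  have hg'_cont : Continuous g' :=
    (LipschitzWith.of_dist_le' fun z w => by simpa only [dist_eq_norm] using hg_lip z w).continuous
  have hfix := apply_eq_of_tendsto_subseq (continuous_projGradStep hP hC_convex hg'_cont) hiter
    hstep hφ.tendsto_atTop hlim
  obtain ⟨hx₀, hmin⟩ :=
    (projGradStep_eq_self_iff hP hC_convex hg_convex hg_grad (hε.trans_le hγ₀.1.1)).mp hfix
  refine ⟨x₀, tendsto_of_antitone_dist_of_mapClusterPt (hfejer x₀ hx₀ hmin) ?_, hx₀,
    isMinOn_iff.mp hmin⟩
  exact MapClusterPt.of_comp hφ.tendsto_atTop ((continuous_snd.tendsto _).comp hlim).mapClusterPt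

/-- Convergence of the projected gradient method to a minimizer of `g` over `C`. -/
theorem projected_gradient_iterate_convergence
    {H : Type*} [NormedAddCommGroup H] [InnerProductSpace ℝ H] [FiniteDimensional ℝ H]
    (β : ℝ) (hβ : 0 < β)
    (C : Set H) (hC_ne : C.Nonempty) (hC_closed : IsClosed C) (hC_convex : Convex ℝ C)
    (g : H → ℝ) (g' : H → H)
    (hg_convex : ConvexOn ℝ Set.univ g)
    (hg_grad : ∀ z : H, HasGradientAt g (g' z) z)
    (hg_lip : ∀ z w : H, ‖g' z - g' w‖ ≤ β * ‖z - w‖)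
    (xstar : H) (hxstar_mem : xstar ∈ C) (hxstar : ∀ y ∈ C, g xstar ≤ g y)
    (projC : H → H)
    (hproj : ∀ z : H, projC z ∈ C ∧ ∀ w ∈ C, ‖z - projC z‖ ≤ ‖z - w‖)
    (ε : ℝ) (hε : 0 < ε) (hεβ : ε < 1/β)
    (γ : ℕ → ℝ) (hγ : ∀ n, γ n ∈ Set.Icc ε (2/β - ε))
    (x : ℕ → H) (hx0 : x 0 ∈ C)
    (hiter : ∀ n, x (n+1) = projC (x n - γ n • g' (x n))) :
    ∃ xlim : H, Tendsto x atTop (𝓝 xlim) ∧ xlim ∈ C ∧ ∀ y ∈ C, g xlim ≤ g y :=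
  projected_gradient_iterate_convergence_general β hβ C hC_convex g g' hg_convex hg_grad hg_lip
    xstar hxstar_mem hxstar projC hproj ε hε γ hγ x hiter
end
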